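/- arXiv:2308.14733 — 5 statements merged into one kernel-verified Lean document; each statement's English description precedes it below -/
import Mathlib

section
/- Let n,m ≥ 1, γ ≥ 0, and let π₁,…,π_m be independent draws from a γ-imperfect shuffler on n elements. Let T ⊆ {1,…,n} be a fixed set of size s with 1 ≤ s ≤ n−1. Then the probability that no π_k creates an edge between T and its complement in the communication graph (equivalently, that π_k(T) = T for every k ∈ {1,…,m}) is at most exp(2·min(s, n−s)·m·γ)·C(n,s)^{−m}, where C(n,s) denotes the binomial coefficient. -/
open Finset

/-- The swap distance between two permutations. -/
noncomputable def swapDist {n : ℕ} (π π' : Equiv.Perm (Fin n)) : ℕ :=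
  sInf {t | ∃ l : List (Equiv.Perm (Fin n)),
    (∀ τ ∈ l, τ.IsSwap) ∧ l.length = t ∧ π' = π * l.prod}

/-- A shuffler on `n` elements: a probability mass function on permutations of `Fin n`. -/
def IsShuffler {n : ℕ} (S : Equiv.Perm (Fin n) → ℝ) : Prop :=
  (∀ π, 0 ≤ S π) ∧ ∑ π : Equiv.Perm (Fin n), S π = 1

/-- A `γ`-imperfect shuffler. -/
def IsImperfectShuffler {n : ℕ} (γ : ℝ) (S : Equiv.Perm (Fin n) → ℝ) : Prop :=
  IsShuffler S ∧
    ∀ π π' : Equiv.Perm (Fin n),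
      S π ≤ Real.exp (γ * (swapDist π π' : ℝ)) * S π'

lemma image_swap_aux {n : ℕ} {T : Finset (Fin n)} {a b : Fin n} (ha : a ∈ T) (hb : b ∉ T) :
    T.image ⇑(Equiv.swap a b) = insert b (T.erase a) := by
  ext x
  simp only [mem_image, mem_insert, mem_erase]
  constructor
  · rintro ⟨y, hy, rfl⟩
    rcases eq_or_ne y a with rfl | hya
    · left; rw [Equiv.swap_apply_left]
    · rcases eq_or_ne y b with rfl | hyb
      · exact absurd hy hb
      · rw [Equiv.swap_apply_of_ne_of_ne hya hyb]; exact Or.inr ⟨hya, hy⟩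
  · rintro (h | ⟨hxa, hx⟩)
    · exact ⟨a, ha, by rw [h]; exact Equiv.swap_apply_left a b⟩
    · exact ⟨x, hx, Equiv.swap_apply_of_ne_of_ne hxa (fun h => hb (h ▸ hx))⟩

/-- Given two finsets of the same size, there is a product of `(T \ T').card` swaps
mapping `T` onto `T'`. -/
lemma exists_swap_list {n : ℕ} : ∀ (d : ℕ) (T T' : Finset (Fin n)),
    T.card = T'.card → (T \ T').card = d →
    ∃ l : List (Equiv.Perm (Fin n)),
      (∀ τ ∈ l, τ.IsSwap) ∧ l.length = d ∧ T.image ⇑l.prod = T' := by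
  intro d
  induction d with
  | zero =>
    intro T T' hcard hd
    refine ⟨[], by simp, rfl, ?_⟩
    have hsub : T ⊆ T' := by
      intro x hx
      by_contra hx'
      exact absurd (card_eq_zero.mp hd ▸ mem_sdiff.mpr ⟨hx, hx'⟩) (notMem_empty x)
    simpa using Finset.eq_of_subset_of_card_le hsub (le_of_eq hcard.symm)
  | succ d ih =>
    intro T T' hcard hd
    have h1 : (T \ T').Nonempty := by
      rw [← Finset.card_pos, hd]; omega
    obtain ⟨a, haa⟩ := h1
    have ha : a ∈ T := (mem_sdiff.mp haa).1
    have ha' : a ∉ T' := (mem_sdiff.mp haa).2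
    have h2 : (T' \ T).Nonempty := by
      rw [← Finset.card_pos, Finset.card_sdiff_comm hcard.symm, hd]; omega
    obtain ⟨b, hbb⟩ := h2
    have hb' : b ∈ T' := (mem_sdiff.mp hbb).1
    have hb : b ∉ T := (mem_sdiff.mp hbb).2
    set T₂ : Finset (Fin n) := insert b (T.erase a) with hT₂
    have hbne : b ∉ T.erase a := fun h => hb (mem_of_mem_erase h)
    have hcard₂ : T₂.card = T'.card := by
      rw [hT₂, card_insert_of_notMem hbne, card_erase_of_mem ha, ← hcard]
      have := Finset.card_pos.mpr ⟨a, ha⟩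
      omega
    have hsd₂ : (T₂ \ T').card = d := by
      rw [hT₂, Finset.insert_sdiff_of_mem _ hb', Finset.erase_sdiff_comm,
        card_erase_of_mem haa, hd]
      omega
    obtain ⟨l', hl'swap, hl'len, hl'img⟩ := ih T₂ T' hcard₂ hsd₂
    have hab : a ≠ b := fun h => hb (h ▸ ha)
    refine ⟨l' ++ [Equiv.swap a b], ?_, by simp [hl'len], ?_⟩
    · intro τ hτ
      rcases List.mem_append.mp hτ with h | h
      · exact hl'swap τ h
      · simp only [List.mem_singleton] at h
        exact h ▸ ⟨a, b, hab, rfl⟩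
    · rw [List.prod_append, List.prod_singleton, Equiv.Perm.coe_mul,
        ← Finset.image_image, image_swap_aux ha hb, ← hT₂, hl'img]

/-- The single-draw bound: the probability that a draw from a `γ`-imperfect shuffler
maps `T` onto `T` is at most `exp (2 * min s (n-s) * γ) / (n.choose s)`. -/
lemma single_draw_bound {n : ℕ} (γ : ℝ) (hγ : 0 ≤ γ)
    (S : Equiv.Perm (Fin n) → ℝ) (hS : IsImperfectShuffler γ S)
    (T : Finset (Fin n)) (s : ℕ) (hT : T.card = s) (hsn : s ≤ n) :
    ∑ π ∈ univ.filter (fun π : Equiv.Perm (Fin n) => T.image ⇑π = T), S π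
      ≤ Real.exp (2 * (min s (n - s) : ℝ) * γ) * ((n.choose s : ℝ))⁻¹ := by
  classical
  set c : ℝ := 2 * (min s (n - s) : ℝ) * γ with hc
  set A : Finset (Equiv.Perm (Fin n)) := univ.filter (fun π => T.image ⇑π = T) with hA
  set P : ℝ := ∑ π ∈ A, S π with hP
  set F : Finset (Fin n) → Finset (Equiv.Perm (Fin n)) :=
    fun T' => univ.filter (fun π => T'.image ⇑π = T) with hF
  -- key: for every T' of card s, P ≤ exp c * ∑_{π ∈ F T'} S π
  have key : ∀ T' ∈ Finset.powersetCard s (univ : Finset (Fin n)),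
      P ≤ Real.exp c * ∑ π ∈ F T', S π := by
    intro T' hT'
    rw [Finset.mem_powersetCard] at hT'
    obtain ⟨l, hlswap, hllen, hlimg⟩ :=
      exists_swap_list ((T' \ T).card) T' T (hT'.2.trans hT.symm) rfl
    set σ := l.prod with hσ
    have hlen : l.length ≤ min s (n - s) := by
      rw [hllen]
      refine le_min ?_ ?_
      · exact le_trans (Finset.card_le_card (Finset.sdiff_subset)) (le_of_eq hT'.2)
      · have hsub : T' \ T ⊆ Tᶜ := by
          intro x hx
          rw [Finset.mem_compl]
          exact (mem_sdiff.mp hx).2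
        calc (T' \ T).card ≤ Tᶜ.card := Finset.card_le_card hsub
          _ = n - s := by rw [Finset.card_compl, hT, Fintype.card_fin]
    have step1 : ∀ π ∈ A, S π ≤ Real.exp c * S (π * σ) := by
      intro π hπ
      have hdist : swapDist π (π * σ) ≤ l.length :=
        Nat.sInf_le ⟨l, hlswap, rfl, rfl⟩
      have hcast : ((min s (n - s) : ℕ) : ℝ) = (min s (n - s) : ℝ) := by
        rw [Nat.cast_min, Nat.cast_sub hsn]
      have hd2 : (swapDist π (π * σ) : ℝ) ≤ 2 * (min s (n - s) : ℝ) := by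
        have h1 : (swapDist π (π * σ) : ℝ) ≤ ((min s (n - s) : ℕ) : ℝ) := by
          exact_mod_cast le_trans hdist hlen
        rw [hcast] at h1
        have h0 : (0 : ℝ) ≤ (min s (n - s) : ℝ) :=
          le_min (Nat.cast_nonneg _) (by
            rw [sub_nonneg]; exact_mod_cast hsn)
        linarith
      calc S π ≤ Real.exp (γ * (swapDist π (π * σ) : ℝ)) * S (π * σ) := hS.2 π (π * σ)
        _ ≤ Real.exp c * S (π * σ) := by
            apply mul_le_mul_of_nonneg_right _ (hS.1.1 _)
            rw [Real.exp_le_exp, hc]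
            calc γ * (swapDist π (π * σ) : ℝ) ≤ γ * (2 * (min s (n - s) : ℝ)) :=
                  mul_le_mul_of_nonneg_left hd2 hγ
              _ = 2 * (min s (n - s) : ℝ) * γ := by ring
    have step2 : ∑ π ∈ A, S (π * σ) ≤ ∑ π ∈ F T', S π := by
      have himg : A.image (fun π => π * σ) ⊆ F T' := by
        intro π' hπ'
        obtain ⟨π, hπ, rfl⟩ := Finset.mem_image.mp hπ'
        rw [hA, Finset.mem_filter] at hπ
        rw [hF, Finset.mem_filter]
        refine ⟨mem_univ _, ?_⟩
        rw [Equiv.Perm.coe_mul, ← Finset.image_image, hlimg, hπ.2]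
      calc ∑ π ∈ A, S (π * σ) = ∑ π' ∈ A.image (fun π => π * σ), S π' := by
            rw [Finset.sum_image (fun x _ y _ h => mul_right_cancel h)]
        _ ≤ ∑ π ∈ F T', S π :=
            Finset.sum_le_sum_of_subset_of_nonneg himg (fun i _ _ => hS.1.1 i)
    calc P ≤ ∑ π ∈ A, Real.exp c * S (π * σ) := Finset.sum_le_sum step1
      _ = Real.exp c * ∑ π ∈ A, S (π * σ) := by rw [Finset.mul_sum]
      _ ≤ Real.exp c * ∑ π ∈ F T', S π :=
          mul_le_mul_of_nonneg_left step2 (Real.exp_nonneg c)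
  -- disjointness of the F T'
  have hdisj : (↑(Finset.powersetCard s (univ : Finset (Fin n))) :
      Set (Finset (Fin n))).PairwiseDisjoint F := by
    intro T₁ _ T₂ _ hne
    simp only [Function.onFun]
    rw [Finset.disjoint_left]
    intro π hπ1 hπ2
    rw [hF, Finset.mem_filter] at hπ1 hπ2
    apply hne
    have e1 : T₁ = T.image ⇑π.symm := by
      rw [← hπ1.2, Finset.image_image]; simp
    have e2 : T₂ = T.image ⇑π.symm := by
      rw [← hπ2.2, Finset.image_image]; simp
    rw [e1, e2]
  have hsum1 : ∑ T' ∈ Finset.powersetCard s (univ : Finset (Fin n)), ∑ π ∈ F T', S π ≤ 1 := by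
    rw [← Finset.sum_biUnion hdisj]
    calc ∑ π ∈ (Finset.powersetCard s (univ : Finset (Fin n))).biUnion F, S π
        ≤ ∑ π : Equiv.Perm (Fin n), S π :=
          Finset.sum_le_sum_of_subset_of_nonneg (Finset.subset_univ _) (fun i _ _ => hS.1.1 i)
      _ = 1 := hS.1.2
  have hchoose : ((Finset.powersetCard s (univ : Finset (Fin n))).card : ℝ) = n.choose s := by
    rw [Finset.card_powersetCard, Finset.card_univ, Fintype.card_fin]
  have hmain : (n.choose s : ℝ) * P ≤ Real.exp c := by
    calc (n.choose s : ℝ) * P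
        = ∑ _T' ∈ Finset.powersetCard s (univ : Finset (Fin n)), P := by
          rw [Finset.sum_const, nsmul_eq_mul, hchoose]
      _ ≤ ∑ T' ∈ Finset.powersetCard s (univ : Finset (Fin n)),
            Real.exp c * ∑ π ∈ F T', S π := Finset.sum_le_sum key
      _ = Real.exp c * ∑ T' ∈ Finset.powersetCard s (univ : Finset (Fin n)),
            ∑ π ∈ F T', S π := by rw [Finset.mul_sum]
      _ ≤ Real.exp c * 1 :=
          mul_le_mul_of_nonneg_left hsum1 (Real.exp_nonneg c)
      _ = Real.exp c := mul_one _
  have hCpos : (0 : ℝ) < (n.choose s : ℝ) := by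
    exact_mod_cast Nat.choose_pos hsn
  calc P = ((n.choose s : ℝ))⁻¹ * ((n.choose s : ℝ) * P) := by
        field_simp
    _ ≤ ((n.choose s : ℝ))⁻¹ * Real.exp c :=
        mul_le_mul_of_nonneg_left hmain (inv_nonneg.mpr hCpos.le)
    _ = Real.exp c * ((n.choose s : ℝ))⁻¹ := mul_comm _ _

/-- for `m` independent draws `πs 0, …, πs (m-1)` from a `γ`-imperfect
shuffler and a fixed set `T` of size `s` with `1 ≤ s ≤ n - 1`, the probability that every
draw maps `T` onto `T` (i.e., no edge between `T` and its complement in the communication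
graph) is at most `exp (2 * min s (n-s) * m * γ) * (n.choose s)⁻ᵐ`. -/
theorem no_edge_prob_le {n m : ℕ} (hn : 1 ≤ n) (hm : 1 ≤ m) (γ : ℝ) (hγ : 0 ≤ γ)
    (S : Equiv.Perm (Fin n) → ℝ) (hS : IsImperfectShuffler γ S)
    (T : Finset (Fin n)) (s : ℕ) (hT : T.card = s) (hs1 : 1 ≤ s) (hs2 : s ≤ n - 1) :
    ∑ πs : Fin m → Equiv.Perm (Fin n),
        (if ∀ k, T.image ⇑(πs k) = T then ∏ k, S (πs k) else 0)
      ≤ Real.exp (2 * (min s (n - s) : ℝ) * (m : ℝ) * γ) * ((n.choose s : ℝ) ^ m)⁻¹ := by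
  classical
  set g : Equiv.Perm (Fin n) → ℝ := fun π => if T.image ⇑π = T then S π else 0 with hg
  have h1 : ∀ πs : Fin m → Equiv.Perm (Fin n),
      (if ∀ k, T.image ⇑(πs k) = T then ∏ k, S (πs k) else 0) = ∏ k, g (πs k) := by
    intro πs
    split_ifs with h
    · exact Finset.prod_congr rfl fun k _ => by rw [hg]; simp [h k]
    · push_neg at h
      obtain ⟨k, hk⟩ := h
      exact (Finset.prod_eq_zero (mem_univ k) (by rw [hg]; simp [hk])).symm
  set P : ℝ := ∑ π ∈ univ.filter (fun π : Equiv.Perm (Fin n) => T.image ⇑π = T), S π with hP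
  have hPg : ∑ π : Equiv.Perm (Fin n), g π = P := by
    rw [hP, Finset.sum_filter]
  have hP0 : 0 ≤ P := Finset.sum_nonneg fun π _ => hS.1.1 π
  have hsn : s ≤ n := le_trans hs2 (Nat.sub_le n 1)
  have hPle : P ≤ Real.exp (2 * (min s (n - s) : ℝ) * γ) * ((n.choose s : ℝ))⁻¹ :=
    single_draw_bound γ hγ S hS T s hT hsn
  calc ∑ πs : Fin m → Equiv.Perm (Fin n),
        (if ∀ k, T.image ⇑(πs k) = T then ∏ k, S (πs k) else 0)
      = ∑ πs : Fin m → Equiv.Perm (Fin n), ∏ k, g (πs k) :=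
        Finset.sum_congr rfl fun πs _ => h1 πs
    _ = ∏ _k : Fin m, ∑ π : Equiv.Perm (Fin n), g π := (Fintype.prod_sum (fun _ => g)).symm
    _ = P ^ m := by rw [hPg, Finset.prod_const, Finset.card_univ, Fintype.card_fin]
    _ ≤ (Real.exp (2 * (min s (n - s) : ℝ) * γ) * ((n.choose s : ℝ))⁻¹) ^ m :=
        pow_le_pow_left₀ hP0 hPle m
    _ = Real.exp (2 * (min s (n - s) : ℝ) * (m : ℝ) * γ) * ((n.choose s : ℝ) ^ m)⁻¹ := by
        rw [mul_pow, ← Real.exp_nat_mul, inv_pow]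
        ring_nf
end

section
/- Let n,m ≥ 1, γ ≥ 0, and let π₁,…,π_m be independent draws from a γ-imperfect shuffler on n elements. Let T ⊆ {1,…,n} be a fixed set of size s with 1 ≤ s ≤ n−1. Then for every integer k with 0 ≤ k ≤ min(s, n−s), the probability that π_k'(T) = T for every k' ∈ {1,…,m} (i.e., no edge between T and its complement in the communication graph) is at most exp(k·m·γ)·C(⌊n/2⌋, k)^{−m}, where C(·,·) denotes the binomial coefficient. -/
open Finset

/-! Let `P` be the probability that one draw maps `T` onto `T`. For a `k`-subset `A ⊆ T` and a
`k`-subset `B ⊆ Tᶜ`, composing such a draw `π` with `k` swaps exchanging `A` and `B` gives `π'`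
with `S π ≤ e^{γk} S π'`, and `(π, A, B)` is recovered from `π'`: `A` is the set of points of `T`
that `π'` sends out of `T`, and symmetrically for `B`. Summing over all triples gives
`C(s,k) C(n-s,k) P ≤ e^{γk}`, and `C(⌊n/2⌋,k) ≤ C(s,k) C(n-s,k)` because `s` or `n - s` is at
least `⌊n/2⌋`. By independence the probability for `m` draws is `P ^ m`. -/

open Equiv

section Exchange
variable {α : Type*} [DecidableEq α]

structure Equiv.Perm.Exchanges (σ : Perm α) (A B : Finset α) : Prop where
  mapsTo_left : ∀ x ∈ A, σ x ∈ B
  mapsTo_right : ∀ x ∈ B, σ x ∈ A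
  apply_eq_self : ∀ x, x ∉ A → x ∉ B → σ x = x

theorem exists_isSwap_list_exchanges {A B : Finset α} (hAB : Disjoint A B) (hcard : #A = #B) :
    ∃ l : List (Perm α), (∀ τ ∈ l, τ.IsSwap) ∧ l.length = #A ∧ l.prod.Exchanges A B := by
  induction A using Finset.induction_on generalizing B with
  | empty =>
    obtain rfl : B = ∅ := Finset.card_eq_zero.mp hcard.symm
    exact ⟨[], by simp, rfl, ⟨by simp, by simp, by simp⟩⟩
  | insert a A ha ih =>
    obtain ⟨b, hb⟩ : B.Nonempty := by rw [← Finset.card_pos, ← hcard]; simp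
    have haB : a ∉ B := Finset.disjoint_left.mp hAB (Finset.mem_insert_self a A)
    have hbA : b ∉ A := fun h => Finset.disjoint_left.mp hAB (Finset.mem_insert_of_mem h) hb
    obtain ⟨l, hswap, hlen, hσ⟩ := ih (B := B.erase b)
      (Finset.disjoint_of_subset_right (B.erase_subset b)
        (Finset.disjoint_of_subset_left (A.subset_insert a) hAB))
      (by rw [Finset.card_erase_of_mem hb, ← hcard, Finset.card_insert_of_notMem ha]; rfl)
    have hab : a ≠ b := fun h => haB (h ▸ hb)
    have hfix_a : l.prod a = a :=
      hσ.apply_eq_self a ha (fun h => haB (Finset.mem_of_mem_erase h))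
    have hfix_b : l.prod b = b := hσ.apply_eq_self b hbA (Finset.notMem_erase b B)
    refine ⟨swap a b :: l, ?_, by simp [hlen, Finset.card_insert_of_notMem ha], ⟨?_, ?_, ?_⟩⟩
    · exact List.forall_mem_cons.mpr ⟨⟨a, b, hab, rfl⟩, hswap⟩
    · intro x hx
      rcases Finset.mem_insert.mp hx with rfl | hx
      · simp [hfix_a, hb]
      · have hy := hσ.mapsTo_left x hx
        have hya : l.prod x ≠ a := fun h => haB (Finset.mem_of_mem_erase (h ▸ hy))
        have hyb : l.prod x ≠ b := Finset.ne_of_mem_erase hy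
        simpa [swap_apply_of_ne_of_ne hya hyb] using Finset.mem_of_mem_erase hy
    · intro x hx
      by_cases hxb : x = b
      · subst hxb; simp [hfix_b]
      · have hy := hσ.mapsTo_right x (Finset.mem_erase.mpr ⟨hxb, hx⟩)
        have hya : l.prod x ≠ a := fun h => ha (h ▸ hy)
        have hyb : l.prod x ≠ b := fun h => hbA (h ▸ hy)
        simp [swap_apply_of_ne_of_ne hya hyb, hy]
    · intro x hxA hxB
      have hxa : x ≠ a := fun h => hxA (h ▸ Finset.mem_insert_self a A)
      have hxb : x ≠ b := fun h => hxB (h ▸ hb)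
      have hx := hσ.apply_eq_self x (fun h => hxA (Finset.mem_insert_of_mem h))
        (fun h => hxB (Finset.mem_of_mem_erase h))
      simp [hx, swap_apply_of_ne_of_ne hxa hxb]

theorem apply_mem_iff_of_image_eq {T : Finset α} {π : Perm α}
    (h : T.image π = T) (z : α) : π z ∈ T ↔ z ∈ T := by
  conv_lhs => rw [← h]
  exact π.injective.mem_finset_image

variable [Fintype α] {σ : Perm α} {A B T : Finset α}

theorem Equiv.Perm.Exchanges.filter_apply_notMem (hσ : σ.Exchanges A B) (hA : A ⊆ T)
    (hB : B ⊆ Tᶜ) : {z ∈ T | σ z ∉ T} = A := by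
  ext z
  simp only [Finset.mem_filter]
  refine ⟨fun ⟨hzT, hz⟩ => ?_,
    fun hz => ⟨hA hz, Finset.mem_compl.mp (hB (hσ.mapsTo_left z hz))⟩⟩
  by_contra hzA
  have hzB : z ∉ B := fun h => Finset.mem_compl.mp (hB h) hzT
  exact hz (by rwa [hσ.apply_eq_self z hzA hzB])

theorem Equiv.Perm.Exchanges.filter_apply_mem (hσ : σ.Exchanges A B) (hA : A ⊆ T)
    (hB : B ⊆ Tᶜ) : {z ∈ Tᶜ | σ z ∈ T} = B := by
  ext z
  simp only [Finset.mem_filter, Finset.mem_compl]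
  refine ⟨fun ⟨hzT, hz⟩ => ?_,
    fun hz => ⟨Finset.mem_compl.mp (hB hz), hA (hσ.mapsTo_right z hz)⟩⟩
  by_contra hzB
  have hzA : z ∉ A := fun h => hzT (hA h)
  rw [hσ.apply_eq_self z hzA hzB] at hz
  exact hzT hz

theorem injOn_mul_of_exchanges {P : Finset (Finset α × Finset α)}
    (hP : ∀ AB ∈ P, AB.1 ⊆ T ∧ AB.2 ⊆ Tᶜ) {σ : Finset α × Finset α → Perm α}
    (hσ : ∀ AB ∈ P, (σ AB).Exchanges AB.1 AB.2) :
    Set.InjOn (fun p : Perm α × (Finset α × Finset α) => p.1 * σ p.2)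
      (univ.filter (fun π : Perm α => T.image π = T) ×ˢ P : Finset _) := by
  have recover : ∀ π : Perm α, T.image π = T → ∀ AB ∈ P,
      {z ∈ T | (π * σ AB) z ∉ T} = AB.1 ∧ {z ∈ Tᶜ | (π * σ AB) z ∈ T} = AB.2 := by
    intro π hπ AB hAB
    simp only [Perm.mul_apply, apply_mem_iff_of_image_eq hπ]
    exact ⟨(hσ AB hAB).filter_apply_notMem (hP AB hAB).1 (hP AB hAB).2,
      (hσ AB hAB).filter_apply_mem (hP AB hAB).1 (hP AB hAB).2⟩
  rintro ⟨π, AB⟩ h ⟨π', AB'⟩ h' he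
  simp only [Finset.coe_product, Set.mem_prod, Finset.coe_filter, Finset.mem_univ, true_and,
    Set.mem_ofPred_eq, Finset.mem_coe] at h h' he
  obtain ⟨hA, hB⟩ := recover π h.1 AB h.2
  obtain ⟨hA', hB'⟩ := recover π' h'.1 AB' h'.2
  obtain rfl : AB = AB' := Prod.ext (by rw [← hA, ← hA', he]) (by rw [← hB, ← hB', he])
  rw [mul_right_cancel he]

end Exchange

theorem swapDist_mul_prod_le {n : ℕ} (π : Perm (Fin n)) {l : List (Perm (Fin n))}
    (hl : ∀ τ ∈ l, τ.IsSwap) : swapDist π (π * l.prod) ≤ l.length :=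
  Nat.sInf_le ⟨l, hl, rfl, rfl⟩

theorem IsImperfectShuffler.le_exp_mul {n d : ℕ} {γ : ℝ} {S : Perm (Fin n) → ℝ}
    (hS : IsImperfectShuffler γ S) (hγ : 0 ≤ γ) {π π' : Perm (Fin n)} (hd : swapDist π π' ≤ d) :
    S π ≤ Real.exp (γ * d) * S π' := by
  refine (hS.2 π π').trans (mul_le_mul_of_nonneg_right ?_ (hS.1.1 π'))
  exact Real.exp_le_exp.mpr (mul_le_mul_of_nonneg_left (by exact_mod_cast hd) hγ)

theorem card_mul_sum_le_of_injOn {α ι β : Type*} [Fintype β] {f : β → ℝ} (hf : ∀ b, 0 ≤ f b)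
    {g : α → ℝ} {s : Finset α} {t : Finset ι} {c : ℝ} (hc : 0 ≤ c) {F : α × ι → β}
    (hF : Set.InjOn F (s ×ˢ t : Finset _)) (hg : ∀ a ∈ s, ∀ i ∈ t, g a ≤ c * f (F (a, i))) :
    #t * ∑ a ∈ s, g a ≤ c * ∑ b, f b := by
  classical
  calc #t * ∑ a ∈ s, g a = ∑ p ∈ s ×ˢ t, g p.1 := by
        rw [Finset.sum_product, Finset.mul_sum]; simp [mul_comm]
    _ ≤ ∑ p ∈ s ×ˢ t, c * f (F p) := Finset.sum_le_sum fun p hp =>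
        hg p.1 (Finset.mem_product.mp hp).1 p.2 (Finset.mem_product.mp hp).2
    _ = c * ∑ b ∈ (s ×ˢ t).image F, f b := by rw [Finset.sum_image hF, Finset.mul_sum]
    _ ≤ c * ∑ b, f b := mul_le_mul_of_nonneg_left (Finset.sum_le_univ_sum_of_nonneg hf) hc

theorem choose_mul_choose_mul_sum_stabilizer_le {n k : ℕ} {γ : ℝ} {S : Perm (Fin n) → ℝ}
    (hS : IsImperfectShuffler γ S) (hγ : 0 ≤ γ) (T : Finset (Fin n)) :
    ((#T).choose k * (n - #T).choose k : ℕ) *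
      ∑ π ∈ univ.filter (fun π : Perm (Fin n) => T.image π = T), S π ≤ Real.exp (γ * k) := by
  classical
  set P := T.powersetCard k ×ˢ Tᶜ.powersetCard k
  have hP : ∀ AB ∈ P, (AB.1 ⊆ T ∧ #AB.1 = k) ∧ (AB.2 ⊆ Tᶜ ∧ #AB.2 = k) := fun AB hAB => by
    simpa [P, Finset.mem_powersetCard] using hAB
  -- quantified over all pairs, so that `choose` yields a total function
  have hswaps : ∀ AB : Finset (Fin n) × Finset (Fin n), ∃ l : List (Perm (Fin n)), AB ∈ P →
      (∀ τ ∈ l, τ.IsSwap) ∧ l.length = k ∧ l.prod.Exchanges AB.1 AB.2 := fun AB => by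
    by_cases h : AB ∈ P
    · obtain ⟨⟨hAT, hA⟩, hBT, hB⟩ := hP AB h
      obtain ⟨l, hl⟩ :=
        exists_isSwap_list_exchanges (disjoint_compl_right.mono hAT hBT) (hA.trans hB.symm)
      exact ⟨l, fun _ => hA ▸ hl⟩
    · exact ⟨[], fun h' => absurd h' h⟩
  choose l hl using hswaps
  have hinj := injOn_mul_of_exchanges (fun AB hAB => ⟨(hP AB hAB).1.1, (hP AB hAB).2.1⟩)
    (fun AB hAB => (hl AB hAB).2.2)
  have key := card_mul_sum_le_of_injOn hS.1.1 (Real.exp_pos _).le hinj fun π _ AB hAB =>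
    hS.le_exp_mul hγ ((swapDist_mul_prod_le π (hl AB hAB).1).trans (hl AB hAB).2.1.le)
  rwa [Finset.card_product, Finset.card_powersetCard, Finset.card_powersetCard, Finset.card_compl,
    Fintype.card_fin, hS.1.2, mul_one] at key

theorem Nat.choose_half_le_choose_mul_choose {n s k : ℕ} (hks : k ≤ s) (hkn : k ≤ n - s) :
    (n / 2).choose k ≤ s.choose k * (n - s).choose k := by
  rcases le_total (n / 2) s with h | h
  · exact (Nat.choose_le_choose k h).trans (Nat.le_mul_of_pos_right _ (Nat.choose_pos hkn))
  · exact (Nat.choose_le_choose k (by omega)).trans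
      (Nat.le_mul_of_pos_left _ (Nat.choose_pos hks))

theorem Fintype.sum_ite_forall_prod_eq_pow {β R : Type*} [Fintype β] [CommSemiring R]
    (p : β → Prop) [DecidablePred p] (f : β → R) (m : ℕ)
    [DecidablePred fun x : Fin m → β => ∀ i, p (x i)] :
    ∑ x : Fin m → β, (if ∀ i, p (x i) then ∏ i, f (x i) else 0) =
      (∑ b ∈ univ.filter p, f b) ^ m := by
  rw [Finset.sum_filter, Fintype.sum_pow]
  simp_rw [Fintype.prod_ite_zero]
  congr!

theorem no_edge_prob_le_half_general {n m : ℕ} (γ : ℝ) (hγ : 0 ≤ γ)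
    (S : Equiv.Perm (Fin n) → ℝ) (hS : IsImperfectShuffler γ S)
    (T : Finset (Fin n)) (s : ℕ) (hT : T.card = s)
    (k : ℕ) (hk : k ≤ min s (n - s)) :
    ∑ πs : Fin m → Equiv.Perm (Fin n),
        (if ∀ k', T.image ⇑(πs k') = T then ∏ k', S (πs k') else 0)
      ≤ Real.exp ((k : ℝ) * (m : ℝ) * γ) * (((n / 2).choose k : ℝ) ^ m)⁻¹ := by
  subst hT
  obtain ⟨hks, hkn⟩ := le_min_iff.mp hk
  have hC : (0 : ℝ) < (n / 2).choose k := by exact_mod_cast Nat.choose_pos (by omega)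
  have hP : ∑ π ∈ univ.filter (fun π : Perm (Fin n) => T.image π = T), S π ≤
      Real.exp (γ * k) / (n / 2).choose k := by
    rw [le_div_iff₀ hC, mul_comm]
    refine le_trans ?_ (choose_mul_choose_mul_sum_stabilizer_le hS hγ T)
    gcongr
    · exact Finset.sum_nonneg fun π _ => hS.1.1 π
    · exact_mod_cast Nat.choose_half_le_choose_mul_choose hks hkn
  rw [Fintype.sum_ite_forall_prod_eq_pow (fun π : Perm (Fin n) => T.image π = T) S]
  calc _ ≤ (Real.exp (γ * k) / (n / 2).choose k) ^ m :=
        pow_le_pow_left₀ (Finset.sum_nonneg fun π _ => hS.1.1 π) hP m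
    _ = _ := by rw [div_pow, ← Real.exp_nat_mul, div_eq_mul_inv]; ring_nf

/-- for `m` independent draws from a `γ`-imperfect shuffler and a fixed set
`T` of size `s` with `1 ≤ s ≤ n - 1`, for every integer `k` with `0 ≤ k ≤ min s (n - s)`,
the probability that every draw maps `T` onto `T` (no edge between `T` and its complement
in the communication graph) is at most `exp (k * m * γ) * ((⌊n/2⌋).choose k)⁻ᵐ`. -/
theorem no_edge_prob_le_half {n m : ℕ} (hn : 1 ≤ n) (hm : 1 ≤ m) (γ : ℝ) (hγ : 0 ≤ γ)
    (S : Equiv.Perm (Fin n) → ℝ) (hS : IsImperfectShuffler γ S)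
    (T : Finset (Fin n)) (s : ℕ) (hT : T.card = s) (hs1 : 1 ≤ s) (hs2 : s ≤ n - 1)
    (k : ℕ) (hk : k ≤ min s (n - s)) :
    ∑ πs : Fin m → Equiv.Perm (Fin n),
        (if ∀ k', T.image ⇑(πs k') = T then ∏ k', S (πs k') else 0)
      ≤ Real.exp ((k : ℝ) * (m : ℝ) * γ) * (((n / 2).choose k : ℝ) ^ m)⁻¹ :=
  no_edge_prob_le_half_general γ hγ S hS T s hT k hk
end

section
/- Let n ≥ 1 and 1 ≤ s ≤ n−1, and let Π_S denote the set of permutations π of {1,…,n} with π({1,…,s}) = {1,…,s}. There exists a family (C_π)_{π ∈ Π_S} of sets of permutations of {1,…,n} such that: (1) C_π ∩ C_{π'} = ∅ for all distinct π,π' ∈ Π_S; (2) for each π ∈ Π_S, π ∈ C_π and π is the unique element of C_π that maps {1,…,s} onto {1,…,s}; (3) |C_π| = C(n,s), the binomial coefficient; and (4) every ψ ∈ C_π satisfies Swap(π,ψ) ≤ 2s. -/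
open Finset

/-- The set `{1, …, s}`, realized as the first `s` elements of `Fin n`. -/
def lowSet (n s : ℕ) : Finset (Fin n) := Finset.univ.filter (fun i => (i : ℕ) < s)

/-- `π` maps `{1, …, s}` onto `{1, …, s}`. -/
def PreservesLow {n : ℕ} (s : ℕ) (π : Equiv.Perm (Fin n)) : Prop :=
  (lowSet n s).image ⇑π = lowSet n s

lemma exists_swap_list_s3 {n : ℕ} (B : Finset (Fin n)) :
    ∀ (k : ℕ) (A : Finset (Fin n)), (A \ B).card = k → A.card = B.card →
    ∃ l : List (Equiv.Perm (Fin n)), (∀ τ ∈ l, τ.IsSwap) ∧ l.length = k ∧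
      A.image ⇑l.prod = B ∧ (∀ x ∈ A ∩ B, l.prod x = x) ∧
      (∀ x, x ∉ A ∪ B → l.prod x = x) := by
  intro k
  induction k with
  | zero =>
    intro A hk hcard
    have hAB : A = B := by
      have hsub : A ⊆ B := by
        intro x hx
        by_contra hxB
        have : x ∈ A \ B := mem_sdiff.mpr ⟨hx, hxB⟩
        simp [Finset.card_eq_zero.mp hk] at this
      exact Finset.eq_of_subset_of_card_le hsub (le_of_eq hcard.symm)
    exact ⟨[], by simp, by simp, by simp [hAB], by simp, by simp⟩
  | succ k ih =>
    intro A hk hcard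
    have hA : (A \ B).Nonempty := by
      rw [← Finset.card_pos, hk]; omega
    obtain ⟨a, ha⟩ := hA
    have haA : a ∈ A := (mem_sdiff.mp ha).1
    have haB : a ∉ B := (mem_sdiff.mp ha).2
    have hBA : (B \ A).Nonempty := by
      rw [← Finset.card_pos, Finset.card_sdiff_comm hcard.symm, hk]; omega
    obtain ⟨b, hb⟩ := hBA
    have hbB : b ∈ B := (mem_sdiff.mp hb).1
    have hbA : b ∉ A := (mem_sdiff.mp hb).2
    have hab : a ≠ b := fun h => hbA (h ▸ haA)
    set τ : Equiv.Perm (Fin n) := Equiv.swap a b with hτ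
    set A' : Finset (Fin n) := insert b (A.erase a) with hA'
    have himg : A.image ⇑τ = A' := by
      ext x
      simp only [hA', mem_image, mem_insert, mem_erase]
      constructor
      · rintro ⟨y, hy, rfl⟩
        rcases eq_or_ne y a with rfl | hya
        · left; simp [hτ]
        · rcases eq_or_ne y b with rfl | hyb
          · exact absurd hy hbA
          · right; rw [hτ, Equiv.swap_apply_of_ne_of_ne hya hyb]; exact ⟨hya, hy⟩
      · rintro (rfl | ⟨hxa, hx⟩)
        · exact ⟨a, haA, by simp [hτ]⟩
        · refine ⟨x, hx, ?_⟩
          have hxb : x ≠ b := fun h => hbA (h ▸ hx)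
          rw [hτ, Equiv.swap_apply_of_ne_of_ne hxa hxb]
    have hA'card : A'.card = B.card := by
      rw [hA', Finset.card_insert_of_notMem (fun h => hbA (Finset.erase_subset _ _ h)),
        Finset.card_erase_of_mem haA]
      have : 1 ≤ A.card := Finset.card_pos.mpr ⟨a, haA⟩
      omega
    have hA'diff : (A' \ B).card = k := by
      have : A' \ B = (A \ B).erase a := by
        ext x
        simp only [hA', mem_sdiff, mem_insert, mem_erase]
        constructor
        · rintro ⟨rfl | ⟨hxa, hx⟩, hxB⟩
          · exact absurd hbB hxB
          · exact ⟨hxa, hx, hxB⟩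
        · rintro ⟨hxa, hx, hxB⟩
          exact ⟨Or.inr ⟨hxa, hx⟩, hxB⟩
      rw [this, Finset.card_erase_of_mem ha, hk]
      omega
    obtain ⟨l', hl'swap, hl'len, hl'img, hl'fix1, hl'fix2⟩ := ih A' hA'diff hA'card
    refine ⟨l' ++ [τ], ?_, by simp [hl'len], ?_, ?_, ?_⟩
    · intro σ hσ
      rcases List.mem_append.mp hσ with h | h
      · exact hl'swap σ h
      · simp only [List.mem_singleton] at h
        exact h ▸ ⟨a, b, hab, rfl⟩
    · rw [List.prod_append, List.prod_singleton]
      have : ⇑(l'.prod * τ) = ⇑l'.prod ∘ ⇑τ := Equiv.Perm.coe_mul _ _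
      rw [this, ← Finset.image_image, himg, hl'img]
    · intro x hx
      obtain ⟨hxA, hxB⟩ := mem_inter.mp hx
      have hxa : x ≠ a := fun h => haB (h ▸ hxB)
      have hxb : x ≠ b := fun h => hbA (h ▸ hxA)
      rw [List.prod_append, List.prod_singleton, Equiv.Perm.mul_apply,
        Equiv.swap_apply_of_ne_of_ne hxa hxb]
      exact hl'fix1 x (mem_inter.mpr ⟨by simp [hA', hxa, hxA], hxB⟩)
    · intro x hx
      simp only [mem_union, not_or] at hx
      obtain ⟨hxA, hxB⟩ := hx
      have hxa : x ≠ a := fun h => hxA (h ▸ haA)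
      have hxb : x ≠ b := fun h => hxB (h ▸ hbB)
      rw [List.prod_append, List.prod_singleton, Equiv.Perm.mul_apply,
        Equiv.swap_apply_of_ne_of_ne hxa hxb]
      refine hl'fix2 x ?_
      simp only [mem_union, not_or, hA', mem_insert, mem_erase]
      exact ⟨by push_neg; exact ⟨hxb, fun _ => hxA⟩, hxB⟩

/-- there is a family `(C π)` indexed by the permutations preserving
`{1,…,s}` such that (1) the sets are pairwise disjoint, (2) `π ∈ C π` and `π` is the unique
element of `C π` preserving `{1,…,s}`, (3) `|C π| = C(n,s)`, and (4) every `ψ ∈ C π` is at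
swap distance at most `2s` from `π`. -/
theorem exists_disjoint_family {n : ℕ} (hn : 1 ≤ n) (s : ℕ) (hs1 : 1 ≤ s)
    (hs2 : s ≤ n - 1) :
    ∃ C : Equiv.Perm (Fin n) → Finset (Equiv.Perm (Fin n)),
      (∀ π π', PreservesLow s π → PreservesLow s π' → π ≠ π' → Disjoint (C π) (C π')) ∧
      (∀ π, PreservesLow s π → π ∈ C π ∧ ∀ ψ ∈ C π, PreservesLow s ψ → ψ = π) ∧
      (∀ π, PreservesLow s π → (C π).card = n.choose s) ∧
      (∀ π, PreservesLow s π → ∀ ψ ∈ C π, swapDist π ψ ≤ 2 * s) := by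
  have hsn : s ≤ n := by omega
  -- cardinality of lowSet
  have hlow : (lowSet n s).card = s := by
    have : lowSet n s = (Finset.range s).attachFin
        (fun m hm => lt_of_lt_of_le (Finset.mem_range.mp hm) hsn) := by
      ext i
      simp [lowSet, Finset.mem_attachFin]
    rw [this, Finset.card_attachFin, Finset.card_range]
  -- choose σ T for each T of card s
  have key : ∀ T : Finset (Fin n), T.card = s →
      ∃ σ : Equiv.Perm (Fin n),
        (∃ l : List (Equiv.Perm (Fin n)), (∀ τ ∈ l, τ.IsSwap) ∧ l.length ≤ s ∧ σ = l.prod) ∧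
        (lowSet n s).image ⇑σ = T ∧ (∀ x ∈ lowSet n s ∩ T, σ x = x) ∧
        (∀ x, x ∉ lowSet n s ∪ T → σ x = x) := by
    intro T hT
    obtain ⟨l, h1, h2, h3, h4, h5⟩ := exists_swap_list_s3 T (lowSet n s \ T).card (lowSet n s)
      rfl (by rw [hlow, hT])
    refine ⟨l.prod, ⟨l, h1, ?_, rfl⟩, h3, h4, h5⟩
    calc l.length = (lowSet n s \ T).card := h2
      _ ≤ (lowSet n s).card := Finset.card_le_card sdiff_subset
      _ = s := hlow
  choose! σ hσ using key
  -- helper: recovering T from ψ = π * (σ T)⁻¹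
  have hrecover : ∀ (π : Equiv.Perm (Fin n)), PreservesLow s π → ∀ T : Finset (Fin n),
      T.card = s → (lowSet n s).image ⇑(π * (σ T)⁻¹)⁻¹ = T := by
    intro π hπ T hT
    have hπinv : (lowSet n s).image ⇑π⁻¹ = lowSet n s := by
      conv_lhs => rw [← hπ]
      rw [Finset.image_image]
      have h0 : ⇑π⁻¹ ∘ ⇑π = id := by ext x; simp
      rw [h0, Finset.image_id]
    rw [mul_inv_rev, inv_inv, Equiv.Perm.coe_mul, ← Finset.image_image, hπinv]
    exact (hσ T hT).2.1
  have hσlow : σ (lowSet n s) = 1 := by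
    obtain ⟨_, himg, hfix1, hfix2⟩ := hσ (lowSet n s) hlow
    apply Equiv.ext
    intro x
    rcases em (x ∈ lowSet n s) with hx | hx
    · rw [Equiv.Perm.one_apply]
      exact hfix1 x (mem_inter.mpr ⟨hx, hx⟩)
    · rw [Equiv.Perm.one_apply]
      exact hfix2 x (by simp [hx])
  -- the family
  refine ⟨fun π => (Finset.univ.powersetCard s).image (fun T => π * (σ T)⁻¹), ?_, ?_, ?_, ?_⟩
  · -- disjointness
    intro π π' hπ hπ' hne
    rw [Finset.disjoint_left]
    intro ψ hψ hψ'
    obtain ⟨T, hTmem, hTeq⟩ := Finset.mem_image.mp hψ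
    obtain ⟨T', hTmem', hTeq'⟩ := Finset.mem_image.mp hψ'
    have hT : T.card = s := Finset.mem_powersetCard_univ.mp hTmem
    have hT' : T'.card = s := Finset.mem_powersetCard_univ.mp hTmem'
    have h1 : T = T' := by
      have e1 := hrecover π hπ T hT
      have e2 := hrecover π' hπ' T' hT'
      rw [hTeq] at e1; rw [hTeq'] at e2
      rw [← e1, ← e2]
    apply hne
    have h2 : π * (σ T)⁻¹ = π' * (σ T')⁻¹ := by rw [hTeq, hTeq']
    rw [h1] at h2
    exact mul_right_cancel h2
  · -- membership and uniqueness
    intro π hπ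
    constructor
    · refine Finset.mem_image.mpr ⟨lowSet n s, Finset.mem_powersetCard_univ.mpr hlow, ?_⟩
      rw [hσlow]; simp
    · intro ψ hψ hψlow
      obtain ⟨T, hTmem, hTeq⟩ := Finset.mem_image.mp hψ
      have hT : T.card = s := Finset.mem_powersetCard_univ.mp hTmem
      have e1 := hrecover π hπ T hT
      rw [hTeq] at e1
      have hψinv : (lowSet n s).image ⇑ψ⁻¹ = lowSet n s := by
        conv_lhs => rw [← hψlow]
        rw [Finset.image_image]
        have h0 : ⇑ψ⁻¹ ∘ ⇑ψ = id := by ext x; simp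
        rw [h0, Finset.image_id]
      rw [hψinv] at e1
      rw [← hTeq, ← e1, hσlow]
      simp
  · -- cardinality
    intro π hπ
    rw [Finset.card_image_of_injOn, Finset.card_powersetCard, Finset.card_univ,
      Fintype.card_fin]
    intro T hTmem T' hTmem' heq
    have hT : T.card = s := Finset.mem_powersetCard_univ.mp (by simpa using hTmem)
    have hT' : T'.card = s := Finset.mem_powersetCard_univ.mp (by simpa using hTmem')
    have e1 := hrecover π hπ T hT
    have e2 := hrecover π hπ T' hT'
    have heq' : π * (σ T)⁻¹ = π * (σ T')⁻¹ := heq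
    rw [← e1, ← e2, heq']
  · -- swap distance
    intro π hπ ψ hψ
    obtain ⟨T, hTmem, hTeq⟩ := Finset.mem_image.mp hψ
    have hT : T.card = s := Finset.mem_powersetCard_univ.mp hTmem
    obtain ⟨⟨l, hlswap, hllen, hlprod⟩, -, -, -⟩ := hσ T hT
    have hmem : l.length ∈ {t | ∃ l' : List (Equiv.Perm (Fin n)),
        (∀ τ ∈ l', τ.IsSwap) ∧ l'.length = t ∧ ψ = π * l'.prod} := by
      refine ⟨(l.map (fun x => x⁻¹)).reverse, ?_, by simp, ?_⟩
      · intro τ hτ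
        simp only [List.mem_reverse, List.mem_map] at hτ
        obtain ⟨τ', hτ', rfl⟩ := hτ
        obtain ⟨x, y, hxy, rfl⟩ := hlswap τ' hτ'
        exact ⟨x, y, hxy, by rw [Equiv.swap_inv]⟩
      · rw [← List.prod_inv_reverse, ← hlprod, ← hTeq]
    calc swapDist π ψ ≤ l.length := Nat.sInf_le hmem
      _ ≤ s := hllen
      _ ≤ 2 * s := by omega
end

section
/- Let n ≥ 1, 1 ≤ s ≤ n−1, and let k be an integer with 0 ≤ k ≤ min(s, n−s). Let Π_S denote the set of permutations π of {1,…,n} with π({1,…,s}) = {1,…,s}. There exists a family (C_π)_{π ∈ Π_S} of sets of permutations of {1,…,n} such that: (1) C_π ∩ C_{π'} = ∅ for all distinct π,π' ∈ Π_S; (2) for each π ∈ Π_S, π ∈ C_π and π is the unique element of C_π that maps {1,…,s} onto {1,…,s}; (3) |C_π| ≥ C(⌊n/2⌋, k), the binomial coefficient; and (4) every ψ ∈ C_π satisfies Swap(π,ψ) ≤ k. -/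
open Finset

/-!
Write `S = {1, …, s}`. For each pair `(X, Y)` with `X ⊆ S`, `Y ⊆ Sᶜ`, `|X| = |Y| = k`, swapping
`X` with `Y` element by element gives a product `σ` of `k` swaps with `σ(S) = (S \ X) ∪ Y`, and
`(X, Y)` can be read off from that set. Adding the identity (the pair `(∅, ∅)`), we get a set `R`
of at least `C(s, k) C(n - s, k) ≥ C(⌊n/2⌋, k)` permutations on which `σ ↦ σ(S)` is injective,
and take `C π = R π`. If `π` preserves `S` then `(σ π)(S) = σ(S)` recovers `σ`, hence `π`; this
gives disjointness and uniqueness. Finally `σ π = π (π⁻¹ σ π)` and conjugates of swaps are swaps,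
so `σ π` is at swap distance at most `k` from `π`.
-/

theorem Nat.choose_div_two_le_mul_choose {a b m k : ℕ} (hm : a + b = m) (ha : k ≤ a)
    (hb : k ≤ b) : (m / 2).choose k ≤ a.choose k * b.choose k := by
  rcases le_total a b with hab | hba
  · calc (m / 2).choose k ≤ b.choose k := Nat.choose_le_choose k (by omega)
      _ ≤ a.choose k * b.choose k := Nat.le_mul_of_pos_left _ (Nat.choose_pos ha)
  · calc (m / 2).choose k ≤ a.choose k := Nat.choose_le_choose k (by omega)
      _ ≤ a.choose k * b.choose k := Nat.le_mul_of_pos_right _ (Nat.choose_pos hb)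

namespace Finset

variable {α : Type*} [DecidableEq α] {S X X' Y Y' : Finset α}

theorem sdiff_sdiff_union (hX : X ⊆ S) (hY : Disjoint Y S) : S \ ((S \ X) ∪ Y) = X := by
  ext a
  have := @hX a
  have : a ∈ Y → a ∉ S := fun h ↦ disjoint_left.mp hY h
  simp only [mem_sdiff, mem_union]
  tauto

theorem sdiff_union_sdiff (hY : Disjoint Y S) : ((S \ X) ∪ Y) \ S = Y := by
  ext a
  have : a ∈ Y → a ∉ S := fun h ↦ disjoint_left.mp hY h
  simp only [mem_sdiff, mem_union]
  tauto

theorem sdiff_union_inj (hX : X ⊆ S) (hX' : X' ⊆ S) (hY : Disjoint Y S) (hY' : Disjoint Y' S)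
    (h : (S \ X) ∪ Y = (S \ X') ∪ Y') : X = X' ∧ Y = Y' :=
  ⟨by rw [← sdiff_sdiff_union hX hY, h, sdiff_sdiff_union hX' hY'],
    by rw [← sdiff_union_sdiff (X := X) hY, h, sdiff_union_sdiff hY']⟩

end Finset

namespace Equiv.Perm

variable {α : Type*} [DecidableEq α]

theorem exists_isSwap_list_image_eq {X Y U : Finset α} (hXU : X ⊆ U) (hYU : _root_.Disjoint Y U)
    (hXY : X.card = Y.card) :
    ∃ l : List (Perm α), (∀ τ ∈ l, τ.IsSwap) ∧ l.length = X.card ∧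
      U.image ⇑l.prod = (U \ X) ∪ Y := by
  induction X using Finset.induction_on generalizing Y with
  | empty =>
    rw [card_empty, eq_comm, card_eq_zero] at hXY
    exact ⟨[], by simp, rfl, by simp [hXY]⟩
  | insert x X hx ih =>
    rw [card_insert_of_notMem hx] at hXY
    obtain ⟨y, hy⟩ := card_pos.mp (by omega : 0 < Y.card)
    have hxU : x ∈ U := hXU (mem_insert_self x X)
    have hyU : y ∉ U := disjoint_left.mp hYU hy
    obtain ⟨l, hl, hlen, himage⟩ := ih ((subset_insert x X).trans hXU)
      (disjoint_of_subset_left (erase_subset y Y) hYU) (by rw [card_erase_of_mem hy]; omega)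
    refine ⟨swap x y :: l, ?_, by simp [hlen, card_insert_of_notMem hx], ?_⟩
    · exact List.forall_mem_cons.mpr ⟨⟨x, y, ne_of_mem_of_not_mem hxU hyU, rfl⟩, hl⟩
    · rw [List.prod_cons, coe_mul, ← image_image, himage]
      apply coe_injective
      push_cast
      rw [image_swap_of_mem_of_notMem (by simp [hxU, hx]) (by simp [hyU])]
      ext a
      grind

theorem exists_isSwap_list_prod_mul_eq_mul (π : Perm α) {l : List (Perm α)}
    (hl : ∀ τ ∈ l, τ.IsSwap) :
    ∃ l' : List (Perm α), (∀ τ ∈ l', τ.IsSwap) ∧ l'.length = l.length ∧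
      l.prod * π = π * l'.prod := by
  induction l with
  | nil => exact ⟨[], by simp, rfl, by simp⟩
  | cons τ l ih =>
    obtain ⟨⟨x, y, hxy, rfl⟩, hτl⟩ := List.forall_mem_cons.mp hl
    obtain ⟨l', hl', hlen, heq⟩ := ih hτl
    refine ⟨swap (π⁻¹ x) (π⁻¹ y) :: l', ?_, by simp [hlen], ?_⟩
    · exact List.forall_mem_cons.mpr ⟨⟨_, _, π⁻¹.injective.ne hxy, rfl⟩, hl'⟩
    · rw [List.prod_cons, mul_assoc, heq, ← mul_assoc, swap_mul_eq_mul_swap, mul_assoc,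
        List.prod_cons]

theorem image_mul_of_image_eq (ρ : Perm α) {S : Finset α} {π : Perm α} (hπ : S.image π = S) :
    S.image ⇑(ρ * π) = S.image ρ := by
  rw [coe_mul, ← image_image, hπ]

section Stabilizer

variable [Fintype α] {S : Finset α} {R : Finset (Perm α)} {π π' ψ : Perm α}

theorem disjoint_image_mul_right (hR : Set.InjOn (fun ρ : Perm α ↦ S.image ρ) R)
    (hπ : S.image π = S) (hπ' : S.image π' = S) (hne : π ≠ π') :
    _root_.Disjoint (R.image (· * π)) (R.image (· * π')) := by
  simp only [disjoint_left, mem_image, not_exists, not_and]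
  rintro _ ⟨ρ, hρ, rfl⟩ ρ' hρ' heq
  have hρρ' : ρ' = ρ := hR hρ' hρ <| by
    simp only [← image_mul_of_image_eq ρ hπ, ← image_mul_of_image_eq ρ' hπ', heq]
  subst hρρ'
  exact hne (mul_left_cancel heq).symm

theorem eq_of_mem_image_mul_right (hR : Set.InjOn (fun ρ : Perm α ↦ S.image ρ) R)
    (h1 : 1 ∈ R) (hπ : S.image π = S) (hψ : ψ ∈ R.image (· * π)) (hψS : S.image ψ = S) :
    ψ = π := by
  obtain ⟨ρ, hρ, rfl⟩ := mem_image.mp hψ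
  have : ρ = 1 := hR hρ h1 <| by
    dsimp only
    rw [← image_mul_of_image_eq ρ hπ, hψS, coe_one, image_id]
  simp [this]

theorem exists_finset_isSwap_prods_image_injOn (S : Finset α) (k : ℕ) :
    ∃ R : Finset (Perm α), 1 ∈ R ∧ Set.InjOn (fun ρ : Perm α ↦ S.image ρ) R ∧
      S.card.choose k * Sᶜ.card.choose k ≤ R.card ∧
      ∀ ρ ∈ R, ∃ l : List (Perm α), (∀ τ ∈ l, τ.IsSwap) ∧ l.length ≤ k ∧ l.prod = ρ := by
  set P := insert (∅, ∅) (S.powersetCard k ×ˢ Sᶜ.powersetCard k)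
  have hP : ∀ p ∈ P, p.1 ⊆ S ∧ _root_.Disjoint p.2 S ∧ p.1.card = p.2.card ∧ p.1.card ≤ k := by
    simp only [P, mem_insert, mem_product, mem_powersetCard, subset_compl_iff_disjoint_right]
    rintro p (rfl | ⟨⟨hX, hXk⟩, hY, hYk⟩)
    · simp
    · exact ⟨hX, hY, hXk.trans hYk.symm, hXk.le⟩
  have hL : ∀ p ∈ P, ∃ l : List (Perm α), (∀ τ ∈ l, τ.IsSwap) ∧ l.length = p.1.card ∧
      S.image ⇑l.prod = (S \ p.1) ∪ p.2 := fun p hp ↦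
    exists_isSwap_list_image_eq (hP p hp).1 (hP p hp).2.1 (hP p hp).2.2.1
  choose! L hL using hL
  have hinj : Set.InjOn (fun p ↦ S.image ⇑(L p).prod) P := by
    intro p hp q hq h
    simp only [(hL p hp).2.2, (hL q hq).2.2] at h
    exact Prod.ext_iff.mpr (sdiff_union_inj (hP p hp).1 (hP q hq).1 (hP p hp).2.1 (hP q hq).2.1 h)
  refine ⟨P.image fun p ↦ (L p).prod, ?_, ?_, ?_, ?_⟩
  · have hnil : L (∅, ∅) = [] := List.eq_nil_of_length_eq_zero (hL _ (mem_insert_self _ _)).2.1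
    exact mem_image.mpr ⟨(∅, ∅), mem_insert_self _ _, by rw [hnil, List.prod_nil]⟩
  · simp only [Set.InjOn, coe_image, Set.forall_mem_image]
    intro p hp q hq h
    rw [hinj hp hq h]
  · rw [card_image_of_injOn fun p hp q hq h ↦ hinj hp hq (by simp only [h]),
      ← card_powersetCard, ← card_powersetCard, ← card_product]
    exact card_le_card (subset_insert _ _)
  · refine forall_mem_image.mpr fun p hp ↦ ?_
    exact ⟨L p, (hL p hp).1, (hL p hp).2.1.trans_le (hP p hp).2.2.2, rfl⟩

end Stabilizer

end Equiv.Perm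

theorem swapDist_prod_mul_le {n : ℕ} (π : Equiv.Perm (Fin n)) {l : List (Equiv.Perm (Fin n))}
    (hl : ∀ τ ∈ l, τ.IsSwap) : swapDist π (l.prod * π) ≤ l.length := by
  obtain ⟨l', hl', hlen, heq⟩ := Equiv.Perm.exists_isSwap_list_prod_mul_eq_mul π hl
  exact hlen ▸ Nat.sInf_le ⟨l', hl', rfl, heq⟩

theorem card_lowSet (n s : ℕ) : (lowSet n s).card = min n s :=
  Fin.card_filter_val_lt

theorem exists_disjoint_family_half_general {n : ℕ} (s : ℕ) (k : ℕ) (hk : k ≤ min s (n - s)) :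
    ∃ C : Equiv.Perm (Fin n) → Finset (Equiv.Perm (Fin n)),
      (∀ π π', PreservesLow s π → PreservesLow s π' → π ≠ π' → Disjoint (C π) (C π')) ∧
      (∀ π, PreservesLow s π → π ∈ C π ∧ ∀ ψ ∈ C π, PreservesLow s ψ → ψ = π) ∧
      (∀ π, PreservesLow s π → (n / 2).choose k ≤ (C π).card) ∧
      (∀ π, PreservesLow s π → ∀ ψ ∈ C π, swapDist π ψ ≤ k) := by
  obtain ⟨R, h1, hinj, hcard, hswap⟩ :=
    Equiv.Perm.exists_finset_isSwap_prods_image_injOn (lowSet n s) k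
  refine ⟨fun π ↦ R.image (· * π),
    fun π π' hπ hπ' ↦ Equiv.Perm.disjoint_image_mul_right hinj hπ hπ',
    fun π hπ ↦ ⟨mem_image.mpr ⟨1, h1, one_mul π⟩,
      fun ψ hψ ↦ Equiv.Perm.eq_of_mem_image_mul_right hinj h1 hπ hψ⟩,
    fun π _ ↦ ?_, fun π _ ↦ forall_mem_image.mpr fun ρ hρ ↦ ?_⟩
  · rw [card_image_of_injective R (mul_left_injective π)]
    refine le_trans ?_ hcard
    rw [card_compl, card_lowSet, Fintype.card_fin]
    exact Nat.choose_div_two_le_mul_choose (by omega) (by omega) (by omega)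
  · obtain ⟨l, hl, hlen, rfl⟩ := hswap ρ hρ
    exact (swapDist_prod_mul_le π hl).trans hlen

/-- for `0 ≤ k ≤ min s (n - s)` there is a family `(C π)` indexed by the
permutations preserving `{1,…,s}` such that (1) the sets are pairwise disjoint, (2) `π ∈ C π`
and `π` is the unique element of `C π` preserving `{1,…,s}`, (3) `|C π| ≥ C(⌊n/2⌋, k)`, and
(4) every `ψ ∈ C π` is at swap distance at most `k` from `π`. -/
theorem exists_disjoint_family_half {n : ℕ} (hn : 1 ≤ n) (s : ℕ) (hs1 : 1 ≤ s)
    (hs2 : s ≤ n - 1) (k : ℕ) (hk : k ≤ min s (n - s)) :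
    ∃ C : Equiv.Perm (Fin n) → Finset (Equiv.Perm (Fin n)),
      (∀ π π', PreservesLow s π → PreservesLow s π' → π ≠ π' → Disjoint (C π) (C π')) ∧
      (∀ π, PreservesLow s π → π ∈ C π ∧ ∀ ψ ∈ C π, PreservesLow s ψ → ψ = π) ∧
      (∀ π, PreservesLow s π → (n / 2).choose k ≤ (C π).card) ∧
      (∀ π, PreservesLow s π → ∀ ψ ∈ C π, swapDist π ψ ≤ k) :=
  exists_disjoint_family_half_general s k hk
end

section
/- Fix integers n,m ≥ 1 and q ≥ 2, and fix a shuffler distribution for the m-message n-player split-and-mix protocol P = P_{m,n} over Z_q. Let (X, X') be drawn uniformly at random from all pairs of vectors in (Z_q)^n having the same coordinate sum. Then E_{X,X'}[TVD(P(X), P(X'))] ≤ sqrt( q^{mn−1}·Pr[P(X) = P'(X)] − 1 ), where on the right-hand side P and P' are two independent executions of the protocol on the same (random) input X, and TVD is the total variation distance between the output distributions of the protocol on the fixed inputs X and X'. -/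
open Finset

/-- An `n × m` message matrix is valid for the input `x` if the `i`-th row sums to `x i`. -/
def validMat {n m q : ℕ} (x : Fin n → ZMod q) (A : Fin n → Fin m → ZMod q) : Prop :=
  ∀ i, ∑ j, A i j = x i

/-- Permute, for each `j`, the `j`-th messages of the `n` players according to `πs j`. -/
def applyShuffle {n m q : ℕ} (πs : Fin m → Equiv.Perm (Fin n))
    (A : Fin n → Fin m → ZMod q) : Fin n → Fin m → ZMod q :=
  fun i j => A ((πs j)⁻¹ i) j

/-- The output distribution of the `m`-message `n`-player split-and-mix protocol on input
`x`, with the shuffling tuple drawn from the distribution `D`: the probability that the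
output matrix is `B`. -/
noncomputable def protOut {n m q : ℕ} (D : (Fin m → Equiv.Perm (Fin n)) → ℝ)
    (x : Fin n → ZMod q) (B : Fin n → Fin m → ZMod q) : ℝ :=
  ∑ πs : Fin m → Equiv.Perm (Fin n),
    D πs *
      ((Nat.card {A : Fin n → Fin m → ZMod q //
          validMat x A ∧ applyShuffle πs A = B} : ℝ) /
        (Nat.card {A : Fin n → Fin m → ZMod q // validMat x A} : ℝ))

/-- Total variation distance between two probability mass functions on message matrices. -/
noncomputable def tvdMat {n m q : ℕ} [NeZero q]
    (μ ν : (Fin n → Fin m → ZMod q) → ℝ) : ℝ :=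
  2⁻¹ * ∑ B : Fin n → Fin m → ZMod q, |μ B - ν B|

/-- The set of pairs of input vectors in `(Z_q)^n` with equal coordinate sums. -/
def eqSumPairs (n q : ℕ) [NeZero q] :
    Finset ((Fin n → ZMod q) × (Fin n → ZMod q)) :=
  Finset.univ.filter (fun p => ∑ i, p.1 i = ∑ i, p.2 i)

instance {n m q : ℕ} (x : Fin n → ZMod q) : DecidablePred (validMat x (m := m)) :=
  fun A => decidable_of_iff (∀ i, ∑ j, A i j = x i) Iff.rfl

lemma applyShuffle_inv_left {n m q : ℕ} (πs : Fin m → Equiv.Perm (Fin n))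
    (A : Fin n → Fin m → ZMod q) :
    applyShuffle (fun j => (πs j)⁻¹) (applyShuffle πs A) = A := by
  funext i j; simp [applyShuffle]

lemma applyShuffle_inv_right {n m q : ℕ} (πs : Fin m → Equiv.Perm (Fin n))
    (B : Fin n → Fin m → ZMod q) :
    applyShuffle πs (applyShuffle (fun j => (πs j)⁻¹) B) = B := by
  funext i j; simp [applyShuffle]

def shuffleEquiv {n m q : ℕ} (πs : Fin m → Equiv.Perm (Fin n)) :
    (Fin n → Fin m → ZMod q) ≃ (Fin n → Fin m → ZMod q) where
  toFun := applyShuffle πs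
  invFun := applyShuffle (fun j => (πs j)⁻¹)
  left_inv := applyShuffle_inv_left πs
  right_inv := applyShuffle_inv_right πs

lemma applyShuffle_eq_iff {n m q : ℕ} (πs : Fin m → Equiv.Perm (Fin n))
    (A B : Fin n → Fin m → ZMod q) :
    applyShuffle πs A = B ↔ A = applyShuffle (fun j => (πs j)⁻¹) B := by
  constructor
  · rintro rfl; exact (applyShuffle_inv_left πs A).symm
  · rintro rfl; exact applyShuffle_inv_right πs B

lemma sum_applyShuffle {n m q : ℕ} (πs : Fin m → Equiv.Perm (Fin n))
    (A : Fin n → Fin m → ZMod q) :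
    ∑ i, ∑ j, applyShuffle πs A i j = ∑ i, ∑ j, A i j := by
  rw [Finset.sum_comm]
  conv_rhs => rw [Finset.sum_comm]
  refine Finset.sum_congr rfl fun j _ => ?_
  exact Equiv.sum_comp ((πs j)⁻¹ : Equiv.Perm (Fin n)) (fun i => A i j)

lemma card_fin_sum_eq {q : ℕ} [NeZero q] (k : ℕ) (s : ZMod q) :
    Fintype.card {f : Fin (k+1) → ZMod q // ∑ j, f j = s} = q ^ k := by
  have e : (Fin k → ZMod q) ≃ {f : Fin (k+1) → ZMod q // ∑ j, f j = s} :=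
  { toFun := fun g => ⟨Fin.snoc g (s - ∑ j, g j), by
      rw [Fin.sum_univ_castSucc]; simp⟩
    invFun := fun f j => f.1 j.castSucc
    left_inv := fun g => by funext j; simp
    right_inv := fun f => by
      ext j
      refine Fin.lastCases ?_ ?_ j
      · have := f.2
        rw [Fin.sum_univ_castSucc] at this
        simp [← this]
      · intro i; simp }
  rw [← Fintype.card_congr e]
  simp [ZMod.card]

lemma card_sum_eq {q : ℕ} [NeZero q] {ι : Type*} [Fintype ι] [DecidableEq ι] [Nonempty ι]
    (s : ZMod q) :
    Fintype.card {f : ι → ZMod q // ∑ j, f j = s} = q ^ (Fintype.card ι - 1) := by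
  obtain ⟨k, hk⟩ : ∃ k, Fintype.card ι = k + 1 :=
    ⟨Fintype.card ι - 1, (Nat.succ_pred_eq_of_pos Fintype.card_pos).symm⟩
  have e := Fintype.equivFinOfCardEq hk
  have e2 : {f : ι → ZMod q // ∑ j, f j = s} ≃ {f : Fin (k+1) → ZMod q // ∑ j, f j = s} :=
    Equiv.subtypeEquiv (Equiv.arrowCongr e (Equiv.refl _)) (fun f => by
      constructor
      · rintro rfl
        exact (Equiv.sum_comp e.symm f).symm ▸ rfl
      · intro h
        rw [← h]
        exact (Equiv.sum_comp e.symm f).symm)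
  rw [Fintype.card_congr e2, card_fin_sum_eq, hk]
  simp

lemma card_valid {n m q : ℕ} [NeZero q] (hm : 1 ≤ m) (x : Fin n → ZMod q) :
    Nat.card {A : Fin n → Fin m → ZMod q // validMat x A} = q ^ (n * (m - 1)) := by
  have : Nonempty (Fin m) := ⟨⟨0, hm⟩⟩
  rw [Nat.card_eq_fintype_card]
  have e0 : {A : Fin n → Fin m → ZMod q // validMat x A} ≃
      {A : Fin n → Fin m → ZMod q // ∀ i, ∑ j, A i j = x i} :=
    Equiv.subtypeEquivRight (fun A => Iff.rfl)
  have e1 := Equiv.subtypePiEquivPi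
    (p := fun (i : Fin n) (f : Fin m → ZMod q) => ∑ j, f j = x i)
  rw [Fintype.card_congr (e0.trans e1), Fintype.card_pi]
  simp only [card_sum_eq, Fintype.card_fin]
  rw [Finset.prod_const, Finset.card_univ, Fintype.card_fin, ← pow_mul, Nat.mul_comm]

lemma card_slice {n m q : ℕ} [NeZero q] (hn : 1 ≤ n) (hm : 1 ≤ m) (s : ZMod q) :
    (Finset.univ.filter fun B : Fin n → Fin m → ZMod q => ∑ i, ∑ j, B i j = s).card
      = q ^ (m * n - 1) := by
  have : Nonempty (Fin n × Fin m) := ⟨⟨0, hn⟩, ⟨0, hm⟩⟩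
  rw [← Fintype.card_subtype]
  have e : {B : Fin n → Fin m → ZMod q // ∑ i, ∑ j, B i j = s} ≃
      {f : Fin n × Fin m → ZMod q // ∑ p, f p = s} :=
    Equiv.subtypeEquiv (Equiv.curry _ _ _).symm (fun B => by
      simp [Fintype.sum_prod_type, Equiv.curry, Function.uncurry])
  rw [Fintype.card_congr e, card_sum_eq]
  simp [Nat.mul_comm]

lemma card_inslice {n q : ℕ} [NeZero q] (hn : 1 ≤ n) (s : ZMod q) :
    (Finset.univ.filter fun x : Fin n → ZMod q => ∑ i, x i = s).card = q ^ (n - 1) := by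
  have : Nonempty (Fin n) := ⟨⟨0, hn⟩⟩
  rw [← Fintype.card_subtype, card_sum_eq]
  simp

lemma card_pair_eq {n m q : ℕ} (x : Fin n → ZMod q) (πs : Fin m → Equiv.Perm (Fin n))
    (B : Fin n → Fin m → ZMod q) :
    Nat.card {A : Fin n → Fin m → ZMod q // validMat x A ∧ applyShuffle πs A = B}
      = if validMat x (applyShuffle (fun j => (πs j)⁻¹) B) then 1 else 0 := by
  by_cases h : validMat x (applyShuffle (fun j => (πs j)⁻¹) B)
  · rw [if_pos h, Nat.card_eq_one_iff_unique]
    constructor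
    · constructor
      rintro ⟨A, -, hA2⟩ ⟨A', -, hA2'⟩
      rw [applyShuffle_eq_iff] at hA2 hA2'
      simp [hA2, hA2']
    · exact ⟨⟨_, h, applyShuffle_inv_right πs B⟩⟩
  · have : IsEmpty {A : Fin n → Fin m → ZMod q // validMat x A ∧ applyShuffle πs A = B} := by
      constructor
      rintro ⟨A, hA, hs⟩
      rw [applyShuffle_eq_iff] at hs
      exact h (hs ▸ hA)
    rw [if_neg h, Nat.card_of_isEmpty]

lemma protOut_eq {n m q : ℕ} [NeZero q] (hm : 1 ≤ m)
    (D : (Fin m → Equiv.Perm (Fin n)) → ℝ) (x : Fin n → ZMod q)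
    (B : Fin n → Fin m → ZMod q) :
    protOut D x B = ∑ πs : Fin m → Equiv.Perm (Fin n),
      D πs * ((if validMat x (applyShuffle (fun j => (πs j)⁻¹) B) then (1:ℝ) else 0) /
        (q : ℝ) ^ (n * (m - 1))) := by
  unfold protOut
  refine Finset.sum_congr rfl fun πs _ => ?_
  rw [card_pair_eq, card_valid hm]
  split_ifs <;> push_cast <;> ring

lemma protOut_nonneg {n m q : ℕ} (D : (Fin m → Equiv.Perm (Fin n)) → ℝ)
    (hD0 : ∀ πs, 0 ≤ D πs) (x : Fin n → ZMod q) (B : Fin n → Fin m → ZMod q) :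
    0 ≤ protOut D x B := by
  refine Finset.sum_nonneg fun πs _ => mul_nonneg (hD0 πs) ?_
  positivity

lemma protOut_sum_one {n m q : ℕ} [NeZero q] (hm : 1 ≤ m)
    (D : (Fin m → Equiv.Perm (Fin n)) → ℝ)
    (hD1 : ∑ πs : Fin m → Equiv.Perm (Fin n), D πs = 1) (x : Fin n → ZMod q) :
    ∑ B : Fin n → Fin m → ZMod q, protOut D x B = 1 := by
  have hq : (0:ℝ) < (q : ℝ) ^ (n * (m - 1)) := by
    have := NeZero.pos q; positivity
  simp_rw [protOut_eq hm]
  rw [Finset.sum_comm]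
  have key : ∀ πs : Fin m → Equiv.Perm (Fin n),
      ∑ B : Fin n → Fin m → ZMod q,
        (if validMat x (applyShuffle (fun j => (πs j)⁻¹) B) then (1:ℝ) else 0)
      = (q : ℝ) ^ (n * (m - 1)) := by
    intro πs
    rw [← Equiv.sum_comp (shuffleEquiv πs)
      (fun B => if validMat x (applyShuffle (fun j => (πs j)⁻¹) B) then (1:ℝ) else 0)]
    have : ∀ A : Fin n → Fin m → ZMod q,
        applyShuffle (fun j => (πs j)⁻¹) (shuffleEquiv πs A) = A :=
      applyShuffle_inv_left πs
    simp_rw [this]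
    rw [Finset.sum_boole]
    have := card_valid hm x
    rw [Nat.card_eq_fintype_card, Fintype.card_subtype] at this
    rw [this]
    push_cast
    ring
  calc ∑ πs : Fin m → Equiv.Perm (Fin n), ∑ B : Fin n → Fin m → ZMod q,
        D πs * ((if validMat x (applyShuffle (fun j => (πs j)⁻¹) B) then (1:ℝ) else 0) /
          (q : ℝ) ^ (n * (m - 1)))
      = ∑ πs : Fin m → Equiv.Perm (Fin n), D πs := by
        refine Finset.sum_congr rfl fun πs _ => ?_
        rw [← Finset.mul_sum, ← Finset.sum_div, key]
        field_simp
    _ = 1 := hD1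

lemma protOut_eq_zero {n m q : ℕ} [NeZero q] (hm : 1 ≤ m)
    (D : (Fin m → Equiv.Perm (Fin n)) → ℝ) (x : Fin n → ZMod q)
    (B : Fin n → Fin m → ZMod q) (hB : ∑ i, ∑ j, B i j ≠ ∑ i, x i) :
    protOut D x B = 0 := by
  rw [protOut_eq hm]
  refine Finset.sum_eq_zero fun πs _ => ?_
  rw [if_neg, zero_div, mul_zero]
  intro h
  apply hB
  have h2 : ∑ i, ∑ j, applyShuffle (fun j => (πs j)⁻¹) B i j = ∑ i, x i :=
    Finset.sum_congr rfl fun i _ => h i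
  rw [← sum_applyShuffle (fun j => (πs j)⁻¹) B, h2]

lemma slice_avg {n m q : ℕ} [NeZero q] (hm : 1 ≤ m)
    (D : (Fin m → Equiv.Perm (Fin n)) → ℝ)
    (hD1 : ∑ πs : Fin m → Equiv.Perm (Fin n), D πs = 1) (s : ZMod q)
    (B : Fin n → Fin m → ZMod q) :
    ∑ x ∈ Finset.univ.filter (fun x : Fin n → ZMod q => ∑ i, x i = s), protOut D x B
      = (if ∑ i, ∑ j, B i j = s then (1:ℝ) else 0) / (q : ℝ) ^ (n * (m - 1)) := by
  simp_rw [protOut_eq hm]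
  rw [Finset.sum_comm]
  have key : ∀ πs : Fin m → Equiv.Perm (Fin n),
      ∑ x ∈ Finset.univ.filter (fun x : Fin n → ZMod q => ∑ i, x i = s),
        (if validMat x (applyShuffle (fun j => (πs j)⁻¹) B) then (1:ℝ) else 0)
      = if ∑ i, ∑ j, B i j = s then (1:ℝ) else 0 := by
    intro πs
    set A₀ := applyShuffle (fun j => (πs j)⁻¹) B with hA₀
    set r : Fin n → ZMod q := fun i => ∑ j, A₀ i j with hr
    have hv : ∀ x : Fin n → ZMod q, validMat x A₀ ↔ x = r := by
      intro x
      constructor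
      · intro h; funext i; exact (h i).symm
      · rintro rfl; intro i; rfl
    simp_rw [hv]
    rw [Finset.sum_ite_eq' _ r (fun _ => (1:ℝ))]
    congr 1
    rw [Finset.mem_filter]
    simp only [Finset.mem_univ, true_and]
    rw [show ∑ i, r i = ∑ i, ∑ j, B i j from (sum_applyShuffle _ B).symm ▸ rfl]
  calc ∑ πs : Fin m → Equiv.Perm (Fin n),
        ∑ x ∈ Finset.univ.filter (fun x : Fin n → ZMod q => ∑ i, x i = s),
        D πs * ((if validMat x (applyShuffle (fun j => (πs j)⁻¹) B) then (1:ℝ) else 0) /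
          (q : ℝ) ^ (n * (m - 1)))
      = ∑ πs : Fin m → Equiv.Perm (Fin n),
          D πs * ((if ∑ i, ∑ j, B i j = s then (1:ℝ) else 0) / (q : ℝ) ^ (n * (m - 1))) := by
        refine Finset.sum_congr rfl fun πs _ => ?_
        rw [← Finset.mul_sum, ← Finset.sum_div, key]
    _ = _ := by rw [← Finset.sum_mul, hD1, one_mul]

lemma key_bound {n m q : ℕ} [NeZero q] (hn : 1 ≤ n) (hm : 1 ≤ m)
    (D : (Fin m → Equiv.Perm (Fin n)) → ℝ)
    (hD1 : ∑ πs : Fin m → Equiv.Perm (Fin n), D πs = 1)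
    (x : Fin n → ZMod q) (s : ZMod q) (hs : ∑ i, x i = s) :
    (∑ B : Fin n → Fin m → ZMod q,
        |protOut D x B - (if ∑ i, ∑ j, B i j = s then (1:ℝ) else 0) / (q:ℝ)^(m*n-1)|) ^ 2
      ≤ (q:ℝ)^(m*n-1) * (∑ B : Fin n → Fin m → ZMod q, (protOut D x B)^2) - 1 := by
  have hq0 : (0:ℝ) < (q:ℝ) := by exact_mod_cast (NeZero.pos q)
  set K : ℝ := (q:ℝ)^(m*n-1) with hKdef
  have hK : 0 < K := by positivity
  set μ : (Fin n → Fin m → ZMod q) → ℝ := protOut D x with hμdef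
  set U : (Fin n → Fin m → ZMod q) → ℝ :=
    fun B => (if ∑ i, ∑ j, B i j = s then (1:ℝ) else 0) / K with hUdef
  set S : Finset (Fin n → Fin m → ZMod q) :=
    Finset.univ.filter (fun B => ∑ i, ∑ j, B i j = s) with hSdef
  have hcard : (S.card : ℝ) = K := by
    rw [hSdef, card_slice hn hm s]; push_cast; rfl
  have hmemS : ∀ B : Fin n → Fin m → ZMod q, B ∈ S ↔ ∑ i, ∑ j, B i j = s := by
    intro B; simp [hSdef]
  have hμoff : ∀ B ∈ Finset.univ, B ∉ S → μ B = 0 := by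
    intro B _ hB
    exact protOut_eq_zero hm D x B (by rw [hs]; exact fun h => hB ((hmemS B).2 h))
  have hUoff : ∀ B, B ∉ S → U B = 0 := by
    intro B hB
    rw [hUdef]
    simp only [if_neg (fun h => hB ((hmemS B).2 h)), zero_div]
  have hUS : ∀ B ∈ S, U B = 1 / K := by
    intro B hB
    rw [hUdef]; simp only [if_pos ((hmemS B).1 hB)]
  have hμS : ∑ B ∈ S, μ B = 1 := by
    rw [Finset.sum_subset (Finset.subset_univ S) (fun B h1 h2 => hμoff B h1 h2)]
    exact protOut_sum_one hm D hD1 x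
  have hμ2S : ∑ B ∈ S, μ B ^ 2 = ∑ B : Fin n → Fin m → ZMod q, μ B ^ 2 := by
    refine Finset.sum_subset (Finset.subset_univ S) (fun B h1 h2 => ?_)
    rw [hμoff B h1 h2]; ring
  have hrestrict : ∑ B : Fin n → Fin m → ZMod q, |μ B - U B| = ∑ B ∈ S, |μ B - U B| := by
    refine (Finset.sum_subset (Finset.subset_univ S) (fun B h1 h2 => ?_)).symm
    rw [hμoff B h1 h2, hUoff B h2]; simp
  have expand : ∑ B ∈ S, (μ B - U B) ^ 2
      = (∑ B : Fin n → Fin m → ZMod q, μ B ^ 2) - 1 / K := by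
    have h1 : ∀ B ∈ S, (μ B - U B) ^ 2 = μ B ^ 2 - (2 / K) * μ B + (1 / K) ^ 2 := by
      intro B hB; rw [hUS B hB]; ring
    rw [Finset.sum_congr rfl h1]
    rw [Finset.sum_add_distrib, Finset.sum_sub_distrib, ← Finset.mul_sum, hμS,
      Finset.sum_const, hμ2S, nsmul_eq_mul, hcard]
    field_simp
    ring
  have cs := sum_mul_sq_le_sq_mul_sq S (fun _ => (1:ℝ)) (fun B => |μ B - U B|)
  simp only [one_mul, one_pow, Finset.sum_const, nsmul_eq_mul, sq_abs, mul_one] at cs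
  calc (∑ B : Fin n → Fin m → ZMod q, |μ B - U B|) ^ 2
      = (∑ B ∈ S, |μ B - U B|) ^ 2 := by rw [hrestrict]
    _ ≤ (S.card : ℝ) * ∑ B ∈ S, (μ B - U B) ^ 2 := cs
    _ = K * ((∑ B : Fin n → Fin m → ZMod q, μ B ^ 2) - 1 / K) := by rw [hcard, expand]
    _ = K * (∑ B : Fin n → Fin m → ZMod q, μ B ^ 2) - 1 := by field_simp

/-- with `(X, X')` uniform over pairs of equal-sum inputs,
`E[TVD(P(X), P(X'))] ≤ sqrt(q^{mn-1}·Pr[P(X) = P'(X)] - 1)`, where `P, P'` are two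
independent executions of the split-and-mix protocol on the same random input `X`. -/
theorem avg_tvd_le_sqrt_collision {n m q : ℕ} [NeZero q] (hn : 1 ≤ n) (hm : 1 ≤ m)
    (hq : 2 ≤ q)
    (D : (Fin m → Equiv.Perm (Fin n)) → ℝ) (hD0 : ∀ πs, 0 ≤ D πs)
    (hD1 : ∑ πs : Fin m → Equiv.Perm (Fin n), D πs = 1) :
    (∑ p ∈ eqSumPairs n q, tvdMat (protOut D p.1) (protOut D p.2)) /
        ((eqSumPairs n q).card : ℝ)
      ≤ Real.sqrt ((q : ℝ) ^ (m * n - 1) *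
          ((∑ p ∈ eqSumPairs n q, ∑ B : Fin n → Fin m → ZMod q, (protOut D p.1 B) ^ 2) /
            ((eqSumPairs n q).card : ℝ)) - 1) := by

  classical
  have hq0 : (0:ℝ) < (q:ℝ) := by exact_mod_cast (NeZero.pos q)
  set K : ℝ := (q:ℝ)^(m*n-1) with hKdef
  have hK : 0 < K := by positivity
  set g : (Fin n → ZMod q) → ℝ :=
    fun x => K * (∑ B : Fin n → Fin m → ZMod q, (protOut D x B)^2) - 1 with hgdef
  -- nonnegativity of g and the pointwise sqrt bound
  have habs : ∀ x : Fin n → ZMod q, ∀ s : ZMod q, ∑ i, x i = s →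
      (∑ B : Fin n → Fin m → ZMod q,
        |protOut D x B - (if ∑ i, ∑ j, B i j = s then (1:ℝ) else 0) / K|) ^ 2 ≤ g x :=
    fun x s hs => key_bound hn hm D hD1 x s hs
  have hg0 : ∀ x : Fin n → ZMod q, 0 ≤ g x :=
    fun x => le_trans (sq_nonneg _) (habs x (∑ i, x i) rfl)
  have hbound : ∀ x : Fin n → ZMod q, ∀ s : ZMod q, ∑ i, x i = s →
      ∑ B : Fin n → Fin m → ZMod q,
        |protOut D x B - (if ∑ i, ∑ j, B i j = s then (1:ℝ) else 0) / K|
      ≤ Real.sqrt (g x) := by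
    intro x s hs
    rw [Real.le_sqrt (Finset.sum_nonneg fun B _ => abs_nonneg _) (hg0 x)]
    exact habs x s hs
  -- per pair bound
  have hpair : ∀ p ∈ eqSumPairs n q,
      tvdMat (protOut D p.1) (protOut D p.2)
        ≤ 2⁻¹ * (Real.sqrt (g p.1) + Real.sqrt (g p.2)) := by
    rintro ⟨x, y⟩ hp
    have hxy : ∑ i, x i = ∑ i, y i := by
      simpa [eqSumPairs] using hp
    set s := ∑ i, x i with hsdef
    set U : (Fin n → Fin m → ZMod q) → ℝ :=
      fun B => (if ∑ i, ∑ j, B i j = s then (1:ℝ) else 0) / K with hUdef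
    have tri : ∑ B : Fin n → Fin m → ZMod q, |protOut D x B - protOut D y B|
        ≤ (∑ B : Fin n → Fin m → ZMod q, |protOut D x B - U B|)
          + ∑ B : Fin n → Fin m → ZMod q, |protOut D y B - U B| := by
      rw [← Finset.sum_add_distrib]
      refine Finset.sum_le_sum fun B _ => ?_
      calc |protOut D x B - protOut D y B|
          = |(protOut D x B - U B) - (protOut D y B - U B)| := by ring_nf
        _ ≤ |protOut D x B - U B| + |protOut D y B - U B| := abs_sub _ _
    have h1 := hbound x s rfl
    have h2 := hbound y s hxy.symm
    unfold tvdMat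
    have : (0:ℝ) ≤ 2⁻¹ := by norm_num
    calc 2⁻¹ * ∑ B : Fin n → Fin m → ZMod q, |protOut D x B - protOut D y B|
        ≤ 2⁻¹ * ((∑ B : Fin n → Fin m → ZMod q, |protOut D x B - U B|)
          + ∑ B : Fin n → Fin m → ZMod q, |protOut D y B - U B|) := by
          exact mul_le_mul_of_nonneg_left tri this
      _ ≤ 2⁻¹ * (Real.sqrt (g x) + Real.sqrt (g y)) := by
          exact mul_le_mul_of_nonneg_left (add_le_add h1 h2) this
  -- swap symmetry
  have hswap : ∑ p ∈ eqSumPairs n q, Real.sqrt (g p.2)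
      = ∑ p ∈ eqSumPairs n q, Real.sqrt (g p.1) := by
    refine Finset.sum_nbij' (i := Prod.swap) (j := Prod.swap) ?_ ?_ ?_ ?_ ?_
    · intro p hp; simpa [eqSumPairs, eq_comm] using hp
    · intro p hp; simpa [eqSumPairs, eq_comm] using hp
    · intro p _; simp
    · intro p _; simp
    · intro p _; rfl
  -- numerator bound
  have hnum : ∑ p ∈ eqSumPairs n q, tvdMat (protOut D p.1) (protOut D p.2)
      ≤ ∑ p ∈ eqSumPairs n q, Real.sqrt (g p.1) := by
    calc ∑ p ∈ eqSumPairs n q, tvdMat (protOut D p.1) (protOut D p.2)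
        ≤ ∑ p ∈ eqSumPairs n q, 2⁻¹ * (Real.sqrt (g p.1) + Real.sqrt (g p.2)) :=
          Finset.sum_le_sum hpair
      _ = 2⁻¹ * ((∑ p ∈ eqSumPairs n q, Real.sqrt (g p.1))
            + ∑ p ∈ eqSumPairs n q, Real.sqrt (g p.2)) := by
          rw [← Finset.mul_sum, Finset.sum_add_distrib]
      _ = ∑ p ∈ eqSumPairs n q, Real.sqrt (g p.1) := by rw [hswap]; ring
  -- cardinality positive
  have hNpos : 0 < ((eqSumPairs n q).card : ℝ) := by
    have : (⟨fun _ => (0:ZMod q), fun _ => (0:ZMod q)⟩ :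
        (Fin n → ZMod q) × (Fin n → ZMod q)) ∈ eqSumPairs n q := by
      simp [eqSumPairs]
    exact_mod_cast Finset.card_pos.2 ⟨_, this⟩
  set N : ℝ := ((eqSumPairs n q).card : ℝ) with hNdef
  have hNne : N ≠ 0 := ne_of_gt hNpos
  -- sum of g
  have hgsum0 : 0 ≤ ∑ p ∈ eqSumPairs n q, g p.1 :=
    Finset.sum_nonneg fun p _ => hg0 p.1
  -- Cauchy-Schwarz for the average of sqrt
  have cs2 := sum_mul_sq_le_sq_mul_sq (eqSumPairs n q) (fun _ => (1:ℝ))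
    (fun p => Real.sqrt (g p.1))
  simp only [one_mul, one_pow, Finset.sum_const, nsmul_eq_mul, mul_one] at cs2
  have hsqrtsq : ∑ p ∈ eqSumPairs n q, Real.sqrt (g p.1) ^ 2
      = ∑ p ∈ eqSumPairs n q, g p.1 :=
    Finset.sum_congr rfl fun p _ => Real.sq_sqrt (hg0 p.1)
  rw [hsqrtsq] at cs2
  -- final chain
  have hfinal : (∑ p ∈ eqSumPairs n q, Real.sqrt (g p.1)) / N
      ≤ Real.sqrt ((∑ p ∈ eqSumPairs n q, g p.1) / N) := by
    rw [div_le_iff₀ hNpos]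
    have heq : Real.sqrt ((∑ p ∈ eqSumPairs n q, g p.1) / N) * N
        = Real.sqrt ((∑ p ∈ eqSumPairs n q, g p.1) * N) := by
      nth_rewrite 2 [← Real.sqrt_sq hNpos.le]
      rw [← Real.sqrt_mul (div_nonneg hgsum0 hNpos.le)]
      congr 1
      field_simp
    rw [heq, Real.le_sqrt (Finset.sum_nonneg fun p _ => Real.sqrt_nonneg _)
      (mul_nonneg hgsum0 hNpos.le)]
    calc (∑ p ∈ eqSumPairs n q, Real.sqrt (g p.1)) ^ 2
        ≤ N * ∑ p ∈ eqSumPairs n q, g p.1 := cs2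
      _ = (∑ p ∈ eqSumPairs n q, g p.1) * N := by ring
  have hrw : (∑ p ∈ eqSumPairs n q, g p.1) / N
      = K * ((∑ p ∈ eqSumPairs n q,
          ∑ B : Fin n → Fin m → ZMod q, (protOut D p.1 B) ^ 2) / N) - 1 := by
    have : ∑ p ∈ eqSumPairs n q, g p.1
        = K * (∑ p ∈ eqSumPairs n q,
            ∑ B : Fin n → Fin m → ZMod q, (protOut D p.1 B) ^ 2) - N := by
      rw [hgdef]
      rw [Finset.sum_sub_distrib, ← Finset.mul_sum, Finset.sum_const, nsmul_eq_mul, mul_one]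
    rw [this]
    field_simp
  calc (∑ p ∈ eqSumPairs n q, tvdMat (protOut D p.1) (protOut D p.2)) / N
      ≤ (∑ p ∈ eqSumPairs n q, Real.sqrt (g p.1)) / N :=
        by gcongr
    _ ≤ Real.sqrt ((∑ p ∈ eqSumPairs n q, g p.1) / N) := hfinal
    _ = _ := by rw [hrw]
end
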